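/- arXiv:math/0203163 — 2 statements merged into one kernel-verified Lean document; each statement's English description precedes it below -/
import Mathlib

section
/- (Convexity of vacancy numbers, type D_n^{(1)}.) Let ν be as in the context. Then for every 1 ≤ a ≤ n and every integer i ≥ 1 such that m_i(ν^{(a)}) = 0, one has 2·P_i^{(a)}(ν) ≥ P_{i−1}^{(a)}(ν) + P_{i+1}^{(a)}(ν). -/
/-!
STATEMENT 13: convexity of vacancy numbers, type D_n^{(1)}.
-/

namespace OSS

/-- `Q i τ = Σ_{t ∈ τ} min(t, i)`. -/
def Q (i : ℚ) (τ : Multiset ℚ) : ℚ := (τ.map (fun t => min t i)).sum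

/-- Vacancy numbers of type `D_n^{(1)}` (with `ν 0 = ∅` assumed). -/
def P (n L : ℕ) (ν : ℕ → Multiset ℚ) (a : ℕ) (i : ℚ) : ℚ :=
  if a = n then Q i (ν (n - 2)) - 2 * Q i (ν n)
  else if a = n - 1 then Q i (ν (n - 2)) - 2 * Q i (ν (n - 1))
  else if a = n - 2 then
    Q i (ν (n - 3)) - 2 * Q i (ν (n - 2)) + Q i (ν (n - 1)) + Q i (ν n)
  else
    Q i (ν (a - 1)) - 2 * Q i (ν a) + Q i (ν (a + 1))
      + (L : ℚ) * min i 1 * (if a = 1 then 1 else 0)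

lemma min_concave (t i : ℚ) : min t (i - 1) + min t (i + 1) ≤ 2 * min t i := by
  rcases le_total t i with h | h
  · have h0 : min t i = t := min_eq_left h
    have h2 : min t (i + 1) = t := min_eq_left (by linarith)
    have h3 : min t (i - 1) ≤ t := min_le_left _ _
    linarith
  · have h0 : min t i = i := min_eq_right h
    have h1 : min t (i - 1) = i - 1 := min_eq_right (by linarith)
    have h3 : min t (i + 1) ≤ i + 1 := min_le_right _ _
    linarith

lemma min_lin (k i : ℤ) (hne : k ≠ i) :
    min (k : ℚ) ((i : ℚ) - 1) + min (k : ℚ) ((i : ℚ) + 1) = 2 * min (k : ℚ) (i : ℚ) := by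
  rcases lt_or_gt_of_ne hne with h | h
  · have hk : k ≤ i - 1 := by omega
    have h1 : (k : ℚ) ≤ (i : ℚ) - 1 := by exact_mod_cast hk
    rw [min_eq_left h1, min_eq_left (by linarith), min_eq_left (by linarith)]
    ring
  · have hk : i + 1 ≤ k := by omega
    have h1 : (i : ℚ) + 1 ≤ (k : ℚ) := by exact_mod_cast hk
    rw [min_eq_right (by linarith), min_eq_right h1, min_eq_right (by linarith)]
    ring

lemma Q_concave (i : ℚ) (τ : Multiset ℚ) : Q (i - 1) τ + Q (i + 1) τ ≤ 2 * Q i τ := by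
  induction τ using Multiset.induction_on with
  | empty => simp [Q]
  | cons t s ih =>
    simp only [Q, Multiset.map_cons, Multiset.sum_cons] at *
    have := min_concave t i
    linarith

lemma Q_linear (i : ℚ) (τ : Multiset ℚ)
    (H : ∀ t ∈ τ, min t (i - 1) + min t (i + 1) = 2 * min t i) :
    Q (i - 1) τ + Q (i + 1) τ = 2 * Q i τ := by
  induction τ using Multiset.induction_on with
  | empty => simp [Q]
  | cons t s ih =>
    simp only [Q, Multiset.map_cons, Multiset.sum_cons] at *
    have h1 := H t (Multiset.mem_cons_self t s)
    have h2 := ih (fun x hx => H x (Multiset.mem_cons_of_mem hx))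
    linarith

theorem vacancy_convex_D (n L : ℕ) (hn : 4 ≤ n) (lam : ℕ → ℤ) (ν : ℕ → Multiset ℚ)
    (hν0 : ν 0 = 0)
    (hparts : ∀ a, 1 ≤ a → a ≤ n → ∀ t ∈ ν a, ∃ k : ℤ, 0 < k ∧ t = (k : ℚ))
    (hsize : ∀ a, 1 ≤ a → a ≤ n - 2 →
      (ν a).sum = (L : ℚ) - ∑ b ∈ Finset.Icc 1 a, (lam b : ℚ))
    (hsize1 : (ν (n - 1)).sum =
      ((L : ℚ) - (∑ b ∈ Finset.Icc 1 (n - 1), (lam b : ℚ)) + (lam n : ℚ)) / 2)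
    (hsize2 : (ν n).sum = ((L : ℚ) - ∑ b ∈ Finset.Icc 1 n, (lam b : ℚ)) / 2)
    :
    ∀ a, 1 ≤ a → a ≤ n → ∀ i : ℤ, 1 ≤ i → (ν a).count (i : ℚ) = 0 →
      P n L ν a ((i : ℚ) - 1) + P n L ν a ((i : ℚ) + 1) ≤ 2 * P n L ν a (i : ℚ) := by
  intro a ha1 han i hi hc
  have hni : (i : ℚ) ∉ ν a := Multiset.count_eq_zero.mp hc
  have key : Q ((i : ℚ) - 1) (ν a) + Q ((i : ℚ) + 1) (ν a) = 2 * Q (i : ℚ) (ν a) := by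
    apply Q_linear
    intro t ht
    obtain ⟨k, hk, rfl⟩ := hparts a ha1 han t ht
    exact min_lin k i (fun h => hni (h ▸ ht))
  by_cases h1 : a = n
  · rw [h1] at key
    simp only [P, if_pos h1]
    have := Q_concave (i : ℚ) (ν (n - 2))
    linarith
  by_cases h2 : a = n - 1
  · rw [h2] at key
    simp only [P, if_neg h1, if_pos h2]
    have := Q_concave (i : ℚ) (ν (n - 2))
    linarith
  by_cases h3 : a = n - 2
  · rw [h3] at key
    simp only [P, if_neg h1, if_neg h2, if_pos h3]
    have c1 := Q_concave (i : ℚ) (ν (n - 3))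
    have c2 := Q_concave (i : ℚ) (ν (n - 1))
    have c3 := Q_concave (i : ℚ) (ν n)
    linarith
  · simp only [P, if_neg h1, if_neg h2, if_neg h3]
    have c1 := Q_concave (i : ℚ) (ν (a - 1))
    have c2 := Q_concave (i : ℚ) (ν (a + 1))
    have hm2 : min ((i : ℚ) - 1) 1 + min ((i : ℚ) + 1) 1 ≤ 2 * min (i : ℚ) 1 := by
      rw [min_comm ((i : ℚ) - 1), min_comm ((i : ℚ) + 1), min_comm (i : ℚ)]
      exact min_concave 1 i
    have hL : (0 : ℚ) ≤ (L : ℚ) := Nat.cast_nonneg L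
    have hm3 : (L : ℚ) * min ((i : ℚ) - 1) 1 + (L : ℚ) * min ((i : ℚ) + 1) 1
        ≤ (L : ℚ) * (2 * min (i : ℚ) 1) := by nlinarith [hm2, hL]
    by_cases ha : a = 1
    · simp only [ha, if_pos rfl, if_true, eq_self_iff_true, mul_one]
      rw [ha] at key c1 c2
      linarith
    · simp only [if_neg ha, mul_zero]
      linarith
end OSS
end

section
/- (Lemma 'equiv', type D_n^{(1)}.) Suppose in addition that λ is D_n-dominant, i.e., λ_1 ≥ λ_2 ≥ ⋯ ≥ λ_{n−1} and λ_{n−1} + λ_n ≥ 0. Then the following are equivalent: (1) P_i^{(a)}(ν) ≥ 0 for every 1 ≤ a ≤ n and every integer i ≥ 1; (2) P_i^{(a)}(ν) ≥ 0 for every 1 ≤ a ≤ n and every integer i ≥ 1 such that m_i(ν^{(a)}) > 0. -/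
/-!
STATEMENT 15: Lemma 'equiv', type D_n^{(1)}.
-/

namespace OSS

/-- All members are positive integers. -/
def IntPos (τ : Multiset ℚ) : Prop := ∀ t ∈ τ, ∃ k : ℤ, 0 < k ∧ t = (k : ℚ)

lemma intPos_zero : IntPos 0 := by intro t ht; simp at ht

lemma Q_empty (x : ℚ) : Q x 0 = 0 := by simp [Q]

lemma Q_cons (x t : ℚ) (s : Multiset ℚ) : Q x (t ::ₘ s) = min t x + Q x s := by
  simp [Q]

lemma Q_at_zero {τ : Multiset ℚ} (h : IntPos τ) : Q 0 τ = 0 := by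
  induction τ using Multiset.induction_on with
  | empty => simp [Q]
  | cons t s ih =>
    obtain ⟨k, hk, hte⟩ := h t (Multiset.mem_cons_self t s)
    have hk' : (0:ℚ) ≤ (k:ℚ) := by exact_mod_cast hk.le
    rw [Q_cons, hte, min_eq_right hk',
      ih (fun u hu => h u (Multiset.mem_cons_of_mem hu)), add_zero]

lemma Q_tail {τ : Multiset ℚ} (h : IntPos τ) {x : ℚ} (hx : τ.sum ≤ x) :
    Q x τ = τ.sum := by
  have hnn : ∀ t ∈ τ, (0:ℚ) ≤ t := by
    intro t ht; obtain ⟨k, hk, hte⟩ := h t ht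
    rw [hte]; exact_mod_cast hk.le
  have hle : ∀ t ∈ τ, t ≤ x := fun t ht => (Multiset.single_le_sum hnn t ht).trans hx
  unfold Q
  have hmap : τ.map (fun t => min t x) = τ.map id :=
    Multiset.map_congr rfl (fun t ht => min_eq_left (hle t ht))
  rw [hmap, Multiset.map_id]

lemma Q_secdiff {τ : Multiset ℚ} (h : IntPos τ) {i : ℕ} (hi : 1 ≤ i) :
    Q ((i:ℚ)+1) τ + Q ((i:ℚ)-1) τ = 2 * Q (i:ℚ) τ - (τ.count (i:ℚ) : ℚ) := by
  induction τ using Multiset.induction_on with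
  | empty => simp [Q]
  | cons t s ih =>
    have ihs := ih (fun u hu => h u (Multiset.mem_cons_of_mem hu))
    obtain ⟨k, hk, hte⟩ := h t (Multiset.mem_cons_self t s)
    have key : min t ((i:ℚ)+1) + min t ((i:ℚ)-1)
        = 2 * min t (i:ℚ) - (if t = (i:ℚ) then 1 else 0) := by
      subst hte
      rcases lt_trichotomy k (i:ℤ) with hlt | heq | hgt
      · have h1 : (k:ℚ) ≤ (i:ℚ) - 1 := by
          have : k ≤ (i:ℤ) - 1 := by omega
          exact_mod_cast this
        have hne : (k:ℚ) ≠ (i:ℚ) := by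
          intro hcon
          have : k = (i:ℤ) := by exact_mod_cast hcon
          omega
        rw [min_eq_left (by linarith), min_eq_left h1, min_eq_left (by linarith),
          if_neg hne]
        ring
      · have hkq : (k:ℚ) = (i:ℚ) := by exact_mod_cast heq
        rw [hkq, min_eq_left (by linarith), min_eq_right (by linarith),
          min_self, if_pos rfl]
        ring
      · have h1 : (i:ℚ) + 1 ≤ (k:ℚ) := by
          have : (i:ℤ) + 1 ≤ k := by omega
          exact_mod_cast this
        have hne : (k:ℚ) ≠ (i:ℚ) := by
          intro hcon
          have : k = (i:ℤ) := by exact_mod_cast hcon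
          omega
        rw [min_eq_right (by linarith), min_eq_right (by linarith),
          min_eq_right (by linarith), if_neg hne]
        ring
    rw [Q_cons, Q_cons, Q_cons, Multiset.count_cons]
    push_cast
    by_cases hti : t = (i:ℚ)
    · rw [if_pos hti] at key
      rw [if_pos hti.symm]
      linarith
    · rw [if_neg hti] at key
      rw [if_neg (fun hc => hti hc.symm)]
      linarith

/-- Abstract discrete argument: concave off `S`, zero at `0`, eventually
constant, nonnegative on `S` implies nonnegative everywhere. -/
lemma discrete_min (f : ℕ → ℚ) (S : ℕ → Prop) (h0 : f 0 = 0) (N : ℕ)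
    (hN : ∀ i, N ≤ i → f i = f N)
    (hconc : ∀ i, 1 ≤ i → ¬ S i → f (i+1) + f (i-1) ≤ 2 * f i)
    (hS : ∀ i, 1 ≤ i → S i → 0 ≤ f i) :
    ∀ i, 0 ≤ f i := by
  obtain ⟨i0, hi0mem, hmin⟩ :=
    (Finset.range (N+1)).exists_min_image f ⟨0, by simp⟩
  set m := f i0 with hm
  have hglob : ∀ i, m ≤ f i := by
    intro i
    by_cases hiN : i ≤ N
    · exact hmin i (Finset.mem_range.mpr (by omega))
    · rw [hN i (by omega)]
      exact hmin N (Finset.mem_range.mpr (by omega))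
  by_cases hm0 : 0 ≤ m
  · intro i; exact le_trans hm0 (hglob i)
  push_neg at hm0
  exfalso
  have hex : ∃ j, f j ≤ m := ⟨i0, le_refl _⟩
  classical
  set j := Nat.find hex with hjdef
  have hj : f j ≤ m := Nat.find_spec hex
  have hj1 : 1 ≤ j := by
    rcases Nat.eq_zero_or_pos j with h | h
    · rw [h, h0] at hj; exact absurd (hj.trans_lt hm0) (lt_irrefl 0)
    · exact h
  have hjS : ¬ S j := fun hS' => by
    have := hS j hj1 hS'; linarith
  have hcj := hconc j hj1 hjS
  have h1 : m ≤ f (j+1) := hglob _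
  have h2 : f (j-1) ≤ m := by linarith
  exact Nat.find_min hex (by omega : j - 1 < j) h2

/-- The general shape of a vacancy number. -/
def G (τ₁ σ τ₂ τ₃ : Multiset ℚ) (c : ℚ) (x : ℚ) : ℚ :=
  Q x τ₁ - 2 * Q x σ + Q x τ₂ + Q x τ₃ + c * min x 1

lemma master (τ₁ σ τ₂ τ₃ : Multiset ℚ) (c : ℚ) (hc : 0 ≤ c)
    (h₁ : IntPos τ₁) (hσ : IntPos σ) (h₂ : IntPos τ₂) (h₃ : IntPos τ₃)
    (hS : ∀ i : ℕ, 1 ≤ i → 0 < σ.count (i:ℚ) → 0 ≤ G τ₁ σ τ₂ τ₃ c (i:ℚ)) :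
    ∀ i : ℕ, 0 ≤ G τ₁ σ τ₂ τ₃ c (i:ℚ) := by
  set N : ℕ := max 1 (max (max ⌈τ₁.sum⌉₊ ⌈σ.sum⌉₊) (max ⌈τ₂.sum⌉₊ ⌈τ₃.sum⌉₊))
    with hNdef
  have hconst : ∀ i : ℕ, N ≤ i → G τ₁ σ τ₂ τ₃ c (i:ℚ)
      = τ₁.sum - 2 * σ.sum + τ₂.sum + τ₃.sum + c := by
    intro i hi
    have hle : ∀ τ : Multiset ℚ, ⌈τ.sum⌉₊ ≤ N → τ.sum ≤ (i:ℚ) := by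
      intro τ hτ
      calc τ.sum ≤ (⌈τ.sum⌉₊ : ℚ) := Nat.le_ceil _
        _ ≤ (i:ℚ) := by exact_mod_cast le_trans hτ hi
    have h1i : (1:ℚ) ≤ (i:ℚ) := by exact_mod_cast le_trans (le_max_left _ _) hi
    rw [G, Q_tail h₁ (hle _ (by omega)), Q_tail hσ (hle _ (by omega)),
        Q_tail h₂ (hle _ (by omega)), Q_tail h₃ (hle _ (by omega)),
        min_eq_right h1i, mul_one]
  apply discrete_min _ (fun i => 0 < σ.count (i:ℚ)) ?_ N ?_ ?_ hS
  · -- value at 0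
    show G τ₁ σ τ₂ τ₃ c ((0:ℕ):ℚ) = 0
    rw [Nat.cast_zero, G, Q_at_zero h₁, Q_at_zero hσ, Q_at_zero h₂, Q_at_zero h₃,
      min_eq_left (by norm_num : (0:ℚ) ≤ 1)]
    ring
  · intro i hi
    rw [hconst i hi, hconst N le_rfl]
  · intro i hi hnS
    have hcnt : σ.count (i:ℚ) = 0 := by omega
    have hi1 : (1:ℚ) ≤ (i:ℚ) := by exact_mod_cast hi
    have e1 : ((i+1 : ℕ):ℚ) = (i:ℚ)+1 := by push_cast; ring
    have e2 : ((i-1 : ℕ):ℚ) = (i:ℚ)-1 := by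
      rw [Nat.cast_sub hi, Nat.cast_one]
    show G τ₁ σ τ₂ τ₃ c ((i+1 : ℕ):ℚ) + G τ₁ σ τ₂ τ₃ c ((i-1 : ℕ):ℚ)
        ≤ 2 * G τ₁ σ τ₂ τ₃ c ((i:ℕ):ℚ)
    rw [e1, e2]
    have q1 := Q_secdiff h₁ hi
    have q2 := Q_secdiff hσ hi
    have q3 := Q_secdiff h₂ hi
    have q4 := Q_secdiff h₃ hi
    rw [hcnt] at q2
    have c1 : (0:ℚ) ≤ (τ₁.count (i:ℚ) : ℚ) := Nat.cast_nonneg _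
    have c3 : (0:ℚ) ≤ (τ₂.count (i:ℚ) : ℚ) := Nat.cast_nonneg _
    have c4 : (0:ℚ) ≤ (τ₃.count (i:ℚ) : ℚ) := Nat.cast_nonneg _
    have hmin : min ((i:ℚ)+1) 1 + min ((i:ℚ)-1) 1 ≤ 2 * min (i:ℚ) 1 := by
      rw [min_eq_right (by linarith), min_eq_right hi1]
      have := min_le_right ((i:ℚ)-1) 1
      linarith
    have hcm := mul_le_mul_of_nonneg_left hmin hc
    simp only [G]
    push_cast at q2
    linarith

theorem vacancy_nonneg_iff_D (n L : ℕ) (hn : 4 ≤ n) (lam : ℕ → ℤ) (ν : ℕ → Multiset ℚ)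
    (hν0 : ν 0 = 0)
    (hparts : ∀ a, 1 ≤ a → a ≤ n → ∀ t ∈ ν a, ∃ k : ℤ, 0 < k ∧ t = (k : ℚ))
    (hsize : ∀ a, 1 ≤ a → a ≤ n - 2 →
      (ν a).sum = (L : ℚ) - ∑ b ∈ Finset.Icc 1 a, (lam b : ℚ))
    (hsize1 : (ν (n - 1)).sum =
      ((L : ℚ) - (∑ b ∈ Finset.Icc 1 (n - 1), (lam b : ℚ)) + (lam n : ℚ)) / 2)
    (hsize2 : (ν n).sum = ((L : ℚ) - ∑ b ∈ Finset.Icc 1 n, (lam b : ℚ)) / 2)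
    (hdom : ∀ a, 1 ≤ a → a ≤ n - 2 → lam (a + 1) ≤ lam a)
    (hdom' : 0 ≤ lam (n - 1) + lam n)
    :
    (∀ a, 1 ≤ a → a ≤ n → ∀ i : ℤ, 1 ≤ i → 0 ≤ P n L ν a (i : ℚ)) ↔
    (∀ a, 1 ≤ a → a ≤ n → ∀ i : ℤ, 1 ≤ i →
      0 < (ν a).count (i : ℚ) → 0 ≤ P n L ν a (i : ℚ)) := by
  constructor
  · intro h a h1 h2 i hi _
    exact h a h1 h2 i hi
  · intro h a h1 h2 i hi
    have hip : ∀ b, b ≤ n → IntPos (ν b) := by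
      intro b hb t ht
      rcases Nat.eq_zero_or_pos b with rfl | hb1
      · rw [hν0] at ht; simp at ht
      · exact hparts b hb1 hb t ht
    have hi0 : (0:ℤ) ≤ i := by omega
    have hcast : (i:ℚ) = ((i.toNat : ℕ):ℚ) := by
      exact_mod_cast (Int.toNat_of_nonneg hi0).symm
    rw [hcast]
    by_cases han : a = n
    · have hPG : ∀ x : ℚ, P n L ν a x = G (ν (n-2)) (ν a) 0 0 0 x := by
        intro x; simp [P, G, Q_empty, han]
      rw [hPG]
      refine master _ _ _ _ _ le_rfl (hip _ (by omega)) (hip _ h2)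
        intPos_zero intPos_zero ?_ i.toNat
      intro i' hi' hcnt
      rw [← hPG]
      have hgoal := h a h1 h2 (i' : ℤ) (by exact_mod_cast hi')
        (by push_cast; exact hcnt)
      push_cast at hgoal
      exact hgoal
    · by_cases han1 : a = n - 1
      · have hne : ¬ (n - 1 = n) := by omega
        have hPG : ∀ x : ℚ, P n L ν a x = G (ν (n-2)) (ν a) 0 0 0 x := by
          intro x; simp [P, G, Q_empty, han1, hne]
        rw [hPG]
        refine master _ _ _ _ _ le_rfl (hip _ (by omega)) (hip _ h2)
          intPos_zero intPos_zero ?_ i.toNat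
        intro i' hi' hcnt
        rw [← hPG]
        have hgoal := h a h1 h2 (i' : ℤ) (by exact_mod_cast hi')
          (by push_cast; exact hcnt)
        push_cast at hgoal
        exact hgoal
      · by_cases han2 : a = n - 2
        · have hne : ¬ (n - 2 = n) := by omega
          have hne' : ¬ (n - 2 = n - 1) := by omega
          have hPG : ∀ x : ℚ, P n L ν a x
              = G (ν (n-3)) (ν a) (ν (n-1)) (ν n) 0 x := by
            intro x
            simp only [P, G, Q_empty, han2, hne, hne', if_true, if_false,
              eq_self_iff_true, if_neg hne, if_neg hne', if_pos rfl]
            rw [← han2]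
            ring
          rw [hPG]
          refine master _ _ _ _ _ le_rfl (hip _ (by omega)) (hip _ h2)
            (hip _ (by omega)) (hip _ le_rfl) ?_ i.toNat
          intro i' hi' hcnt
          rw [← hPG]
          have hgoal := h a h1 h2 (i' : ℤ) (by exact_mod_cast hi')
            (by push_cast; exact hcnt)
          push_cast at hgoal
          exact hgoal
        · have hPG : ∀ x : ℚ, P n L ν a x
              = G (ν (a-1)) (ν a) (ν (a+1)) 0
                  ((L : ℚ) * (if a = 1 then 1 else 0)) x := by
            intro x
            simp only [P, G, Q_empty, if_neg han, if_neg han1, if_neg han2]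
            ring
          have hc : (0:ℚ) ≤ (L : ℚ) * (if a = 1 then 1 else 0) := by
            by_cases ha1 : a = 1 <;> simp [ha1]
          rw [hPG]
          refine master _ _ _ _ _ hc (hip _ (by omega)) (hip _ h2)
            (hip _ (by omega)) intPos_zero ?_ i.toNat
          intro i' hi' hcnt
          rw [← hPG]
          have hgoal := h a h1 h2 (i' : ℤ) (by exact_mod_cast hi')
            (by push_cast; exact hcnt)
          push_cast at hgoal
          exact hgoal
end OSS
end
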